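/- arXiv:1409.8193 — 4 statements merged into one kernel-verified Lean document; each statement's English description precedes it below -/
import Mathlib

section
/- Let P denote the space of Borel probability measures on Ω with the topology of weak convergence. Let T : P → P be continuous and let h : P → [0,∞) be lower semicontinuous and satisfy: h(Tν) ≤ h(ν) for every ν ∈ P, and h(Tν) < h(ν) whenever h(ν) > 0. Then for every ν₀ ∈ P, the set C of weak cluster points of the sequence (Tⁿν₀)_{n∈ℕ} (i.e. the set of all limits of weakly convergent subsequences) contains an element ν* with h(ν*) = 0. -/
/-!
Since `Ω` is compact, so is the space of probability measures on it (Prokhorov). The set of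
cluster points of the orbit of `ν₀` is therefore nonempty and compact, and the continuous map `T`
sends it into itself. The lower semicontinuous `h` attains its minimum on it at some `ν*`, and
since `Tν*` is again a cluster point, `h (Tν*) < h ν*` is impossible, so `h ν* = 0`. The space of
measures is metrizable, so the cluster point `ν*` is the limit of a subsequence of the orbit.
-/

open MeasureTheory Filter Topology

/-- The lattice `ℤ^d`. -/
abbrev Zd (d : ℕ) := Fin d → ℤ

/-- The configuration space `Ω = {1,…,q}^{ℤ^d}` (with the product topology). -/
abbrev Conf (d q : ℕ) := Zd d → Fin q

section ClusterSetOfOrbit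

variable {X : Type*} [TopologicalSpace X] {T : X → X} {x₀ x : X}

theorem MapClusterPt.apply_of_iterate (hT : ContinuousAt T x)
    (hx : MapClusterPt x atTop fun n => T^[n] x₀) :
    MapClusterPt (T x) atTop fun n => T^[n] x₀ := by
  refine MapClusterPt.of_comp (tendsto_add_atTop_nat 1) ?_
  have hshift : (T ∘ fun n => T^[n] x₀) = (fun n => T^[n] x₀) ∘ (· + 1) := by
    funext n
    exact (Function.iterate_succ_apply' T n x₀).symm
  exact hshift ▸ hx.continuousAt_comp hT

theorem exists_mapClusterPt_iterate_nonpos [CompactSpace X] (hT : Continuous T) {h : X → ℝ}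
    (hh : LowerSemicontinuous h) (hstrict : ∀ x, 0 < h x → h (T x) < h x) (x₀ : X) :
    ∃ x, MapClusterPt x atTop (fun n => T^[n] x₀) ∧ h x ≤ 0 := by
  set C := {x | MapClusterPt x atTop fun n => T^[n] x₀}
  have hC : IsCompact C := isClosed_setOfPred_clusterPt.isCompact
  obtain ⟨x, -, hxC⟩ := isCompact_univ.exists_mapClusterPt (f := atTop) (u := fun n => T^[n] x₀)
    (by simp)
  obtain ⟨y, hyC, hmin⟩ := (hh.lowerSemicontinuousOn C).exists_isMinOn ⟨x, hxC⟩ hC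
  refine ⟨y, hyC, not_lt.mp fun hpos => ?_⟩
  exact (hstrict y hpos).not_ge (hmin (hyC.apply_of_iterate hT.continuousAt))

end ClusterSetOfOrbit

theorem attractor_discrete_general (d q : ℕ)
    (T : ProbabilityMeasure (Conf d q) → ProbabilityMeasure (Conf d q))
    (hTcont : Continuous T)
    (h : ProbabilityMeasure (Conf d q) → ℝ)
    (hnonneg : ∀ ν, 0 ≤ h ν)
    (hlsc : LowerSemicontinuous h)
    (hstrict : ∀ ν, 0 < h ν → h (T ν) < h ν)
    (ν₀ : ProbabilityMeasure (Conf d q)) :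
    ∃ νstar : ProbabilityMeasure (Conf d q),
      (∃ φ : ℕ → ℕ, StrictMono φ ∧
        Tendsto (fun k => T^[φ k] ν₀) atTop (𝓝 νstar)) ∧ h νstar = 0 := by
  obtain ⟨νstar, hcluster, hle⟩ := exists_mapClusterPt_iterate_nonpos hTcont hlsc hstrict ν₀
  obtain ⟨φ, hφ, hconv⟩ := hcluster.tendsto_subseq
  exact ⟨νstar, ⟨φ, hφ, hconv⟩, le_antisymm hle (hnonneg νstar)⟩

/-- discrete-time case of Theorem 2.3, abstract form.
If `T` is a continuous self-map of the space of Borel probability measures on `Ω`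
(with the topology of weak convergence), `h` is a nonnegative lower semicontinuous
function which does not increase along `T` and strictly decreases whenever it is
positive, then the set of weak cluster points of the trajectory `(Tⁿν₀)` contains
a point where `h` vanishes. -/
theorem attractor_discrete (d q : ℕ) (hd : 1 ≤ d) (hq : 2 ≤ q)
    (T : ProbabilityMeasure (Conf d q) → ProbabilityMeasure (Conf d q))
    (hTcont : Continuous T)
    (h : ProbabilityMeasure (Conf d q) → ℝ)
    (hnonneg : ∀ ν, 0 ≤ h ν)
    (hlsc : LowerSemicontinuous h)
    (hdecr : ∀ ν, h (T ν) ≤ h ν)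
    (hstrict : ∀ ν, 0 < h ν → h (T ν) < h ν)
    (ν₀ : ProbabilityMeasure (Conf d q)) :
    ∃ νstar : ProbabilityMeasure (Conf d q),
      (∃ φ : ℕ → ℕ, StrictMono φ ∧
        Tendsto (fun k => T^[φ k] ν₀) atTop (𝓝 νstar)) ∧ h νstar = 0 :=
  attractor_discrete_general d q T hTcont h hnonneg hlsc hstrict ν₀
end

section
/- Let P denote the space of Borel probability measures on Ω with the topology of weak convergence. Let (T_t)_{t≥0} be a family of continuous maps P → P with T_0 = id and T_{s+t} = T_s ∘ T_t for all s,t ≥ 0, and let h : P → [0,∞) be lower semicontinuous with h(T_tν) ≤ h(ν) for all t ≥ 0 and all ν, and h(T_tν) < h(ν) for every t > 0 whenever h(ν) > 0. Then for every ν₀ ∈ P, the set C of all weak limits of sequences (T_{t_k}ν₀)_{k∈ℕ} with t_k → ∞ contains an element ν* with h(ν*) = 0. -/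
/-!
Since `Ω` is compact, so is the space of probability measures on it; hence the ω-limit set `L`
of `ν₀` is nonempty and compact. It is forward invariant under the semigroup. The lower
semicontinuous `h` attains its minimum on `L` at some `ν*`; if `h ν* > 0` then `T 1 ν*` would be
a point of `L` with a smaller value. Since the weak topology is metrizable, membership in `L` is
witnessed by a sequence of times `t_k → ∞`.
-/

open MeasureTheory Filter Topology

open Set omegaLimit

theorem exists_seq_tendsto_of_mem_omegaLimit {τ α β : Type*} [TopologicalSpace β]
    [FirstCountableTopology β] {f : Filter τ} [f.IsCountablyGenerated] {ϕ : τ → α → β}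
    {x : α} {y : β} (hy : y ∈ ω f ϕ {x}) :
    ∃ ts : ℕ → τ, Tendsto ts atTop f ∧ Tendsto (fun k ↦ ϕ (ts k) x) atTop (𝓝 y) := by
  rw [mem_omegaLimit_singleton_iff_mapClusterPt, MapClusterPt, ClusterPt, inf_comm,
    ← neBot_inf_comap_iff_map] at hy
  obtain ⟨ts, hts⟩ := exists_seq_tendsto (f ⊓ comap (fun t ↦ ϕ t x) (𝓝 y))
  exact ⟨ts, hts.mono_right inf_le_left, tendsto_comap_iff.mp (hts.mono_right inf_le_right)⟩

section Semigroup

variable {X : Type*} [TopologicalSpace X] {T : ℝ → X → X}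

theorem mapsTo_omegaLimit_of_semigroup
    (hT : ∀ s t : ℝ, 0 ≤ s → 0 ≤ t → T (s + t) = T s ∘ T t) {s : ℝ} (hs : 0 ≤ s)
    (hTs : Continuous (T s)) (A : Set X) :
    MapsTo (T s) (ω atTop T A) (ω atTop T A) := by
  have hshift : ∀ᶠ t in atTop, T s ∘ T t = T (s + t) := by
    filter_upwards [eventually_ge_atTop 0] with t ht
    rw [hT s t hs ht]
  refine MapsTo.mono_right (mapsTo_omegaLimit' A (mapsTo_id A) ?_ hTs)
    (omegaLimit_subset_of_tendsto T A (tendsto_atTop_add_const_left atTop s tendsto_id))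
  filter_upwards [hshift] with t ht
  exact fun x _ ↦ congrFun ht x

theorem omegaLimit_inter_nonempty_of_lyapunov [CompactSpace X]
    (hT : ∀ s t : ℝ, 0 ≤ s → 0 ≤ t → T (s + t) = T s ∘ T t)
    (hTcont : ∀ t : ℝ, 0 ≤ t → Continuous (T t))
    {β : Type*} [LinearOrder β] {h : X → β} (hh : LowerSemicontinuous h) {Z : Set X}
    (hZ : ∀ y ∉ Z, ∃ t ≥ 0, h (T t y) < h y) {A : Set X} (hA : A.Nonempty) :
    (ω atTop T A ∩ Z).Nonempty := by
  obtain ⟨y, hyω, hmin⟩ := hh.lowerSemicontinuousOn _ |>.exists_isMinOn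
    (nonempty_omegaLimit atTop T A hA) (isClosed_omegaLimit _ _ _).isCompact
  refine ⟨y, hyω, by_contra fun hyZ ↦ ?_⟩
  obtain ⟨t, ht, hlt⟩ := hZ y hyZ
  have hTy : T t y ∈ ω atTop T A := mapsTo_omegaLimit_of_semigroup hT ht (hTcont t ht) A hyω
  exact (isMinOn_iff.mp hmin _ hTy).not_gt hlt

end Semigroup

theorem attractor_continuous_general (d q : ℕ)
    (T : ℝ → ProbabilityMeasure (Conf d q) → ProbabilityMeasure (Conf d q))
    (hTsemi : ∀ s t : ℝ, 0 ≤ s → 0 ≤ t → T (s + t) = T s ∘ T t)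
    (hTcont : ∀ t : ℝ, 0 ≤ t → Continuous (T t))
    (h : ProbabilityMeasure (Conf d q) → ℝ)
    (hnonneg : ∀ ν, 0 ≤ h ν)
    (hlsc : LowerSemicontinuous h)
    (hstrict : ∀ (t : ℝ), 0 < t → ∀ ν, 0 < h ν → h (T t ν) < h ν)
    (ν₀ : ProbabilityMeasure (Conf d q)) :
    ∃ νstar : ProbabilityMeasure (Conf d q),
      (∃ ts : ℕ → ℝ, Tendsto ts atTop atTop ∧
        Tendsto (fun k => T (ts k) ν₀) atTop (𝓝 νstar)) ∧ h νstar = 0 := by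
  have hdecay : ∀ ν ∉ {ν | h ν ≤ 0}, ∃ t ≥ 0, h (T t ν) < h ν :=
    fun ν hν ↦ ⟨1, zero_le_one, hstrict 1 one_pos ν (not_le.mp hν)⟩
  obtain ⟨νstar, hω, hzero⟩ :=
    omegaLimit_inter_nonempty_of_lyapunov hTsemi hTcont hlsc hdecay (singleton_nonempty ν₀)
  exact ⟨νstar, exists_seq_tendsto_of_mem_omegaLimit hω, le_antisymm hzero (hnonneg νstar)⟩

/-- continuous-time case of Theorem 2.3, abstract form.
If `(T_t)_{t ≥ 0}` is a semigroup of continuous self-maps of the space of Borel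
probability measures on `Ω` (with the topology of weak convergence), and `h` is a
nonnegative lower semicontinuous function which does not increase along the semigroup
and strictly decreases for positive times whenever it is positive, then the set of
weak limits of sequences `T_{t_k} ν₀` with `t_k → ∞` contains a point where `h`
vanishes. -/
theorem attractor_continuous (d q : ℕ) (hd : 1 ≤ d) (hq : 2 ≤ q)
    (T : ℝ → ProbabilityMeasure (Conf d q) → ProbabilityMeasure (Conf d q))
    (hT0 : T 0 = id)
    (hTsemi : ∀ s t : ℝ, 0 ≤ s → 0 ≤ t → T (s + t) = T s ∘ T t)
    (hTcont : ∀ t : ℝ, 0 ≤ t → Continuous (T t))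
    (h : ProbabilityMeasure (Conf d q) → ℝ)
    (hnonneg : ∀ ν, 0 ≤ h ν)
    (hlsc : LowerSemicontinuous h)
    (hdecr : ∀ (t : ℝ), 0 ≤ t → ∀ ν, h (T t ν) ≤ h ν)
    (hstrict : ∀ (t : ℝ), 0 < t → ∀ ν, 0 < h ν → h (T t ν) < h ν)
    (ν₀ : ProbabilityMeasure (Conf d q)) :
    ∃ νstar : ProbabilityMeasure (Conf d q),
      (∃ ts : ℕ → ℝ, Tendsto ts atTop atTop ∧
        Tendsto (fun k => T (ts k) ν₀) atTop (𝓝 νstar)) ∧ h νstar = 0 :=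
  attractor_continuous_general d q T hTsemi hTcont h hnonneg hlsc hstrict ν₀
end

section
/- Let (c_Δ) be a translation-covariant Feller system of jump rates and Φ a translation-invariant potential with ‖Φ‖ < ∞. Then for every η ∈ Ω the series F_{L,Φ}(η) := Σ_{Δ∋0} (1/|Δ|) ∫ c_Δ(η,dζ_Δ) Σ_{A : A∩Δ≠∅} [Φ_A(ζ_Δη_{Δ^c}) − Φ_A(η)] converges absolutely, the partial sums over Δ contained in a finite set Δ̄ converge uniformly in η as Δ̄ increases to ℤ^d, and the function F_{L,Φ} : Ω → ℝ is continuous. Moreover ⟨ν,Φ⟩_L = ∫ F_{L,Φ} dν for every Borel probability measure ν on Ω. -/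
open MeasureTheory Filter Topology

variable {d q : ℕ}

/-- The shift `θ_i`, `(θ_i σ)(j) = σ(j+i)`. -/
def shift (i : Zd d) (σ : Conf d q) : Conf d q := fun j => σ (j + i)

/-- An interaction potential: a family `Φ_A : Ω → ℝ` indexed by finite `A ⊂ ℤ^d`. -/
abbrev Pot (d q : ℕ) := Finset (Zd d) → Conf d q → ℝ

/-- A translation-invariant potential: each `Φ_A` is continuous, depends only on the
coordinates in `A`, and `Φ_{A+i} = Φ_A ∘ θ_i`. -/
structure IsPotential (Φ : Pot d q) : Prop where
  continuous : ∀ A, Continuous (Φ A)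
  isLocal : ∀ (A : Finset (Zd d)) (σ τ : Conf d q), (∀ j ∈ A, σ j = τ j) → Φ A σ = Φ A τ
  shiftCov : ∀ (A : Finset (Zd d)) (i : Zd d) (σ : Conf d q),
    Φ (A.image (· + i)) σ = Φ A (shift i σ)

/-- sup norm `‖f‖_∞` of a function on the (compact) configuration space. -/
noncomputable def supnorm (f : Conf d q → ℝ) : ℝ := ⨆ σ, |f σ|

/-- Summability of `Σ_{A∋0} ‖Φ_A‖_∞` (finiteness of `‖Φ‖`). -/
def PNormSummable (Φ : Pot d q) : Prop :=
  Summable fun A : {A : Finset (Zd d) // (0 : Zd d) ∈ A} => supnorm (Φ A.1)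

/-- The norm `‖Φ‖ = Σ_{A∋0} ‖Φ_A‖_∞`. -/
noncomputable def pnorm (Φ : Pot d q) : ℝ :=
  ∑' A : {A : Finset (Zd d) // (0 : Zd d) ∈ A}, supnorm (Φ A.1)

/-- The norm `‖Φ‖₀ = Σ_{A∋0} |A|⁻¹ ‖Φ_A‖_∞`. -/
noncomputable def pnorm0 (Φ : Pot d q) : ℝ :=
  ∑' A : {A : Finset (Zd d) // (0 : Zd d) ∈ A}, (A.1.card : ℝ)⁻¹ * supnorm (Φ A.1)

/-- A translation-covariant Feller system of jump rates, modelled through the weights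
`c_Δ(η, {ζ_Δ})` of the finite Borel measures `c_Δ(η,·)` on the finite discrete space
`{1,…,q}^Δ`: `η ↦ c_Δ(η,·)` is (weakly) continuous, the family is shift-covariant,
and `Σ_{Δ∋0} c̄_Δ < ∞` where `c̄_Δ = sup_η c_Δ(η, {1,…,q}^Δ)`. -/
structure JumpRates (d q : ℕ) : Type where
  /-- the weight `c_Δ(η, {ζ_Δ})` -/
  c : (Δ : Finset (Zd d)) → Conf d q → (↥Δ → Fin q) → NNReal
  feller : ∀ (Δ : Finset (Zd d)) (ζ : Δ → Fin q), Continuous fun η => c Δ η ζ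
  shiftCov : ∀ (i : Zd d) (Δ : Finset (Zd d)) (η : Conf d q)
      (ζ : ↥(Δ.image (· + i)) → Fin q),
    c (Δ.image (· + i)) η ζ
      = c Δ (shift i η) (fun j => ζ ⟨j.1 + i, Finset.mem_image_of_mem _ j.2⟩)
  cbar_summable : Summable fun Δ : {Δ : Finset (Zd d) // (0 : Zd d) ∈ Δ} =>
    ⨆ η : Conf d q, ∑ ζ : ↥Δ.1 → Fin q, (c Δ.1 η ζ : ℝ)

/-- `c̄_Δ = sup_η c_Δ(η, {1,…,q}^Δ)`. -/
noncomputable def cbar (R : JumpRates d q) (Δ : Finset (Zd d)) : ℝ :=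
  ⨆ η : Conf d q, ∑ ζ : Δ → Fin q, (R.c Δ η ζ : ℝ)

/-- `Σ_{Δ∋0} c̄_Δ`. -/
noncomputable def cbarSum (R : JumpRates d q) : ℝ :=
  ∑' Δ : {Δ : Finset (Zd d) // (0 : Zd d) ∈ Δ}, cbar R Δ.1

/-- The configuration `ζ_Δ η_{Δ^c}`: equal to `ζ` on `Δ` and to `η` off `Δ`. -/
def patch (Δ : Finset (Zd d)) (ζ : Δ → Fin q) (η : Conf d q) : Conf d q :=
  fun j => if h : j ∈ Δ then ζ ⟨j, h⟩ else η j

/-- The `Δ`-term of the function `F_{L,Φ}`: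
`|Δ|⁻¹ ∫ c_Δ(η,dζ_Δ) Σ_{A∩Δ≠∅} [Φ_A(ζ_Δη_{Δ^c}) − Φ_A(η)]`. -/
noncomputable def termL (R : JumpRates d q) (Φ : Pot d q) (Δ : Finset (Zd d))
    (η : Conf d q) : ℝ :=
  (Δ.card : ℝ)⁻¹ * ∑ ζ : Δ → Fin q, (R.c Δ η ζ : ℝ) *
    ∑' A : {A : Finset (Zd d) // (A ∩ Δ).Nonempty}, (Φ A.1 (patch Δ ζ η) - Φ A.1 η)

/-- The function `F_{L,Φ}(η) = Σ_{Δ∋0} |Δ|⁻¹ ∫ c_Δ(η,dζ_Δ) Σ_{A∩Δ≠∅} [Φ_A(ζ_Δη_{Δ^c}) − Φ_A(η)]`. -/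
noncomputable def FL (R : JumpRates d q) (Φ : Pot d q) (η : Conf d q) : ℝ :=
  ∑' Δ : {Δ : Finset (Zd d) // (0 : Zd d) ∈ Δ}, termL R Φ Δ.1 η

/-- The pairing `⟨ν,Φ⟩_L`. -/
noncomputable def pairingL (R : JumpRates d q) (Φ : Pot d q) (ν : Measure (Conf d q)) : ℝ :=
  ∫ η, FL R Φ η ∂ν

/-! Each term of `F_{L,Φ}` is bounded by `2 ‖Φ‖ c̄_Δ`: the sets `A` meeting `Δ` are covered by
`|Δ|` translates of `{A ∋ 0}`, which cancels the factor `|Δ|⁻¹`. Since `Σ_{Δ∋0} c̄_Δ < ∞`, the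
Weierstrass M-test gives absolute and uniform convergence, and continuity of every term is
inherited by `F_{L,Φ}`. -/

section UnionBound

variable {α : Type*} [DecidableEq α] {g : Finset α → ℝ}

theorem indicator_inter_nonempty_le_sum_indicator_mem (hg : 0 ≤ g) (Δ A : Finset α) :
    {A : Finset α | (A ∩ Δ).Nonempty}.indicator g A ≤
      ∑ j ∈ Δ, {A : Finset α | j ∈ A}.indicator g A := by
  have hsum_nonneg : 0 ≤ ∑ j ∈ Δ, {A : Finset α | j ∈ A}.indicator g A :=
    Finset.sum_nonneg fun j _ => Set.indicator_nonneg (fun A _ => hg A) A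
  by_cases hA : (A ∩ Δ).Nonempty
  · obtain ⟨j, hj⟩ := hA
    rw [Finset.mem_inter] at hj
    rw [Set.indicator_of_mem (show A ∈ {A : Finset α | (A ∩ Δ).Nonempty} from ⟨j, by simpa⟩)]
    calc g A = {A : Finset α | j ∈ A}.indicator g A :=
          (Set.indicator_of_mem (show A ∈ {A : Finset α | j ∈ A} from hj.1) g).symm
      _ ≤ _ := Finset.single_le_sum (f := fun j => {A : Finset α | j ∈ A}.indicator g A)
          (fun i _ => Set.indicator_nonneg (fun A _ => hg A) A) hj.2
  · rwa [Set.indicator_of_notMem (show A ∉ {A : Finset α | (A ∩ Δ).Nonempty} from hA)]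

variable (hg : 0 ≤ g) {Δ : Finset α} (hs : ∀ j ∈ Δ, Summable fun A : {A : Finset α // j ∈ A} => g A)
include hg hs

theorem summable_inter_nonempty_of_summable_mem :
    Summable fun A : {A : Finset α // (A ∩ Δ).Nonempty} => g A :=
  summable_subtype_iff_indicator.2 <|
    .of_nonneg_of_le (fun A => Set.indicator_nonneg (fun A _ => hg A) A)
      (indicator_inter_nonempty_le_sum_indicator_mem hg Δ)
      (summable_sum fun j hj => summable_subtype_iff_indicator.1 (hs j hj))

theorem tsum_inter_nonempty_le_sum_tsum_mem :
    ∑' A : {A : Finset α // (A ∩ Δ).Nonempty}, g A ≤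
      ∑ j ∈ Δ, ∑' A : {A : Finset α // j ∈ A}, g A := by
  have hs' : ∀ j ∈ Δ, Summable ({A : Finset α | j ∈ A}.indicator g) :=
    fun j hj => summable_subtype_iff_indicator.1 (hs j hj)
  calc _ = ∑' A, {A : Finset α | (A ∩ Δ).Nonempty}.indicator g A := tsum_subtype _ g
    _ ≤ ∑' A, ∑ j ∈ Δ, {A : Finset α | j ∈ A}.indicator g A :=
        Summable.tsum_le_tsum (indicator_inter_nonempty_le_sum_indicator_mem hg Δ)
          (summable_subtype_iff_indicator.1 (summable_inter_nonempty_of_summable_mem hg hs))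
          (summable_sum hs')
    _ = ∑ j ∈ Δ, ∑' A, {A : Finset α | j ∈ A}.indicator g A := Summable.tsum_finsetSum hs'
    _ = _ := Finset.sum_congr rfl fun j _ => (tsum_subtype _ g).symm

end UnionBound

theorem abs_le_supnorm {f : Conf d q → ℝ} (hf : Continuous f) (σ : Conf d q) :
    |f σ| ≤ supnorm f :=
  le_ciSup (isCompact_range hf.abs).bddAbove σ

theorem supnorm_nonneg (f : Conf d q → ℝ) : 0 ≤ supnorm f :=
  Real.iSup_nonneg fun _ => abs_nonneg _

theorem pnorm_nonneg (Φ : Pot d q) : 0 ≤ pnorm Φ :=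
  tsum_nonneg fun _ => supnorm_nonneg _

theorem shift_surjective (i : Zd d) : Function.Surjective (shift i : Conf d q → Conf d q) :=
  fun σ => ⟨shift (-i) σ, funext fun j => by simp [shift]⟩

def memZeroEquivMem (j : Zd d) :
    {A : Finset (Zd d) // (0 : Zd d) ∈ A} ≃ {A : Finset (Zd d) // j ∈ A} :=
  (Equiv.finsetCongr (Equiv.addRight j)).subtypeEquiv fun A => by simp

namespace IsPotential

variable {Φ : Pot d q} (hΦ : IsPotential Φ)
include hΦ

theorem supnorm_image_add (A : Finset (Zd d)) (i : Zd d) :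
    supnorm (Φ (A.image (· + i))) = supnorm (Φ A) := by
  simp only [supnorm, hΦ.shiftCov]
  exact (shift_surjective i).iSup_comp fun σ => |Φ A σ|

theorem supnorm_memZeroEquivMem (j : Zd d) (A : {A : Finset (Zd d) // (0 : Zd d) ∈ A}) :
    supnorm (Φ (memZeroEquivMem j A).1) = supnorm (Φ A.1) := by
  simpa [memZeroEquivMem, Finset.map_eq_image] using hΦ.supnorm_image_add A.1 j

theorem summable_supnorm_mem (hΦsum : PNormSummable Φ) (j : Zd d) :
    Summable fun A : {A : Finset (Zd d) // j ∈ A} => supnorm (Φ A.1) :=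
  (memZeroEquivMem j).summable_iff.1 <|
    hΦsum.congr fun A => (hΦ.supnorm_memZeroEquivMem j A).symm

theorem tsum_supnorm_mem (j : Zd d) :
    ∑' A : {A : Finset (Zd d) // j ∈ A}, supnorm (Φ A.1) = pnorm Φ := by
  rw [← (memZeroEquivMem j).tsum_eq]
  exact tsum_congr (hΦ.supnorm_memZeroEquivMem j)

variable (hΦsum : PNormSummable Φ) (Δ : Finset (Zd d))
include hΦsum

theorem summable_supnorm_inter_nonempty :
    Summable fun A : {A : Finset (Zd d) // (A ∩ Δ).Nonempty} => supnorm (Φ A.1) :=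
  summable_inter_nonempty_of_summable_mem (fun A => supnorm_nonneg (Φ A))
    fun j _ => hΦ.summable_supnorm_mem hΦsum j

theorem tsum_supnorm_inter_nonempty_le :
    ∑' A : {A : Finset (Zd d) // (A ∩ Δ).Nonempty}, supnorm (Φ A.1) ≤ Δ.card * pnorm Φ := by
  calc _ ≤ ∑ j ∈ Δ, ∑' A : {A : Finset (Zd d) // j ∈ A}, supnorm (Φ A.1) :=
        tsum_inter_nonempty_le_sum_tsum_mem (fun A => supnorm_nonneg (Φ A))
          fun j _ => hΦ.summable_supnorm_mem hΦsum j
    _ = Δ.card * pnorm Φ := by simp [hΦ.tsum_supnorm_mem]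

omit hΦsum in
theorem abs_sub_le (A : Finset (Zd d)) (σ τ : Conf d q) :
    |Φ A σ - Φ A τ| ≤ 2 * supnorm (Φ A) :=
  calc |Φ A σ - Φ A τ| ≤ |Φ A σ| + |Φ A τ| := abs_sub _ _
    _ ≤ supnorm (Φ A) + supnorm (Φ A) :=
      add_le_add (abs_le_supnorm (hΦ.continuous A) σ) (abs_le_supnorm (hΦ.continuous A) τ)
    _ = 2 * supnorm (Φ A) := (two_mul _).symm

theorem summable_abs_sub_inter_nonempty (σ τ : Conf d q) :
    Summable fun A : {A : Finset (Zd d) // (A ∩ Δ).Nonempty} => |Φ A.1 σ - Φ A.1 τ| :=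
  .of_nonneg_of_le (fun _ => abs_nonneg _) (fun A => hΦ.abs_sub_le A.1 σ τ)
    ((hΦ.summable_supnorm_inter_nonempty hΦsum Δ).mul_left 2)

theorem abs_tsum_sub_inter_nonempty_le (σ τ : Conf d q) :
    |∑' A : {A : Finset (Zd d) // (A ∩ Δ).Nonempty}, (Φ A.1 σ - Φ A.1 τ)| ≤
      2 * (Δ.card * pnorm Φ) :=
  calc _ ≤ ∑' A : {A : Finset (Zd d) // (A ∩ Δ).Nonempty}, |Φ A.1 σ - Φ A.1 τ| := by
        simp only [← Real.norm_eq_abs]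
        exact norm_tsum_le_tsum_norm (by simpa only [← Real.norm_eq_abs] using
          hΦ.summable_abs_sub_inter_nonempty hΦsum Δ σ τ)
    _ ≤ ∑' A : {A : Finset (Zd d) // (A ∩ Δ).Nonempty}, 2 * supnorm (Φ A.1) :=
        Summable.tsum_le_tsum (fun A => hΦ.abs_sub_le A.1 σ τ)
          (hΦ.summable_abs_sub_inter_nonempty hΦsum Δ σ τ)
          ((hΦ.summable_supnorm_inter_nonempty hΦsum Δ).mul_left 2)
    _ ≤ 2 * (Δ.card * pnorm Φ) := by
        rw [tsum_mul_left]
        gcongr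
        exact hΦ.tsum_supnorm_inter_nonempty_le hΦsum Δ

end IsPotential

theorem JumpRates.continuous_sum_c (R : JumpRates d q) (Δ : Finset (Zd d)) :
    Continuous fun η : Conf d q => ∑ ζ : Δ → Fin q, (R.c Δ η ζ : ℝ) :=
  continuous_finsetSum _ fun ζ _ => NNReal.continuous_coe.comp (R.feller Δ ζ)

theorem JumpRates.sum_c_le_cbar (R : JumpRates d q) (Δ : Finset (Zd d)) (η : Conf d q) :
    ∑ ζ : Δ → Fin q, (R.c Δ η ζ : ℝ) ≤ cbar R Δ :=
  le_ciSup (isCompact_range (R.continuous_sum_c Δ)).bddAbove η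

theorem continuous_patch (Δ : Finset (Zd d)) (ζ : Δ → Fin q) :
    Continuous fun η : Conf d q => patch Δ ζ η :=
  continuous_pi fun j => by
    by_cases h : j ∈ Δ
    · simpa only [patch, dif_pos h] using continuous_const
    · simpa only [patch, dif_neg h] using continuous_apply j

section termL

variable {Φ : Pot d q} (hΦ : IsPotential Φ) (hΦsum : PNormSummable Φ) (R : JumpRates d q)
  (Δ : Finset (Zd d))
include hΦ hΦsum

theorem abs_termL_le (η : Conf d q) : |termL R Φ Δ η| ≤ 2 * pnorm Φ * cbar R Δ := by
  have hΦ0 := pnorm_nonneg Φ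
  calc |termL R Φ Δ η|
      ≤ (Δ.card : ℝ)⁻¹ * ∑ ζ : Δ → Fin q, (R.c Δ η ζ : ℝ) * (2 * (Δ.card * pnorm Φ)) := by
        rw [termL, abs_mul, abs_of_nonneg (by positivity)]
        gcongr
        refine (Finset.abs_sum_le_sum_abs _ _).trans (Finset.sum_le_sum fun ζ _ => ?_)
        rw [abs_mul, NNReal.abs_eq]
        gcongr
        exact hΦ.abs_tsum_sub_inter_nonempty_le hΦsum Δ _ _
    _ = ((Δ.card : ℝ)⁻¹ * Δ.card) * ((∑ ζ : Δ → Fin q, (R.c Δ η ζ : ℝ)) * (2 * pnorm Φ)) := by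
        rw [← Finset.sum_mul]; ring
    _ ≤ (∑ ζ : Δ → Fin q, (R.c Δ η ζ : ℝ)) * (2 * pnorm Φ) :=
        mul_le_of_le_one_left (by positivity) inv_mul_le_one
    _ ≤ cbar R Δ * (2 * pnorm Φ) := by gcongr; exact R.sum_c_le_cbar Δ η
    _ = 2 * pnorm Φ * cbar R Δ := mul_comm _ _

theorem continuous_termL : Continuous (termL R Φ Δ) := by
  refine continuous_const.mul (continuous_finsetSum _ fun ζ _ => ?_)
  refine (NNReal.continuous_coe.comp (R.feller Δ ζ)).mul <|
    continuous_tsum (fun A => ?_) ((hΦ.summable_supnorm_inter_nonempty hΦsum Δ).mul_left 2)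
      fun A η => hΦ.abs_sub_le A.1 _ _
  exact ((hΦ.continuous A.1).comp (continuous_patch Δ ζ)).sub (hΦ.continuous A.1)

end termL

theorem tendsto_powerset_subtype_atTop {α : Type*} (p : Finset α → Prop) [DecidablePred p] :
    Tendsto (fun B : Finset α => B.powerset.subtype p) atTop atTop :=
  tendsto_atTop_finset_of_monotone
    (fun _ _ hB _ => by simpa using fun h => h.trans hB)
    fun A => ⟨A.1, by simp⟩

theorem FL_continuous_general
    (R : JumpRates d q) (Φ : Pot d q) (hΦ : IsPotential Φ) (hΦsum : PNormSummable Φ) :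
    (∀ (η : Conf d q) (Δ : {Δ : Finset (Zd d) // (0 : Zd d) ∈ Δ}) (ζ : ↥Δ.1 → Fin q),
      Summable fun A : {A : Finset (Zd d) // (A ∩ Δ.1).Nonempty} =>
        |Φ A.1 (patch Δ.1 ζ η) - Φ A.1 η|) ∧
    (∀ η : Conf d q,
      Summable fun Δ : {Δ : Finset (Zd d) // (0 : Zd d) ∈ Δ} => |termL R Φ Δ.1 η|) ∧
    TendstoUniformly
      (fun (B : Finset (Zd d)) (η : Conf d q) =>
        ∑ Δ ∈ B.powerset.filter (fun Δ => (0 : Zd d) ∈ Δ), termL R Φ Δ η)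
      (FL R Φ) atTop ∧
    Continuous (FL R Φ) ∧
    (∀ ν : Measure (Conf d q), IsProbabilityMeasure ν →
      pairingL R Φ ν = ∫ η, FL R Φ η ∂ν) := by
  have hbound (Δ : {Δ : Finset (Zd d) // (0 : Zd d) ∈ Δ}) (η : Conf d q) :
      ‖termL R Φ Δ.1 η‖ ≤ 2 * pnorm Φ * cbar R Δ.1 :=
    abs_termL_le hΦ hΦsum R Δ.1 η
  have hM : Summable fun Δ : {Δ : Finset (Zd d) // (0 : Zd d) ∈ Δ} => 2 * pnorm Φ * cbar R Δ.1 :=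
    R.cbar_summable.mul_left _
  refine ⟨fun η Δ ζ => hΦ.summable_abs_sub_inter_nonempty hΦsum Δ.1 _ _,
    fun η => .of_nonneg_of_le (fun _ => abs_nonneg _) (hbound · η) hM, ?_,
    continuous_tsum (fun Δ => continuous_termL hΦ hΦsum R Δ.1) hM hbound, fun _ _ => rfl⟩
  simp only [← Finset.sum_subtype_eq_sum_filter]
  exact fun u hu =>
    (tendsto_powerset_subtype_atTop _).eventually (tendstoUniformly_tsum hM hbound u hu)

/-- continuity of `F_{L,Φ}`, from the proof of Theorem 2.4.
For a translation-covariant Feller system of jump rates and a translation-invariant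
potential with `‖Φ‖ < ∞`, the series defining `F_{L,Φ}` converges absolutely, its
partial sums over `Δ ⊆ Δ̄` converge uniformly as `Δ̄ ↑ ℤ^d`, `F_{L,Φ}` is continuous,
and `⟨ν,Φ⟩_L = ∫ F_{L,Φ} dν` for every Borel probability measure `ν`. -/
theorem FL_continuous (hd : 1 ≤ d) (hq : 2 ≤ q)
    (R : JumpRates d q) (Φ : Pot d q) (hΦ : IsPotential Φ) (hΦsum : PNormSummable Φ) :
    (∀ (η : Conf d q) (Δ : {Δ : Finset (Zd d) // (0 : Zd d) ∈ Δ}) (ζ : ↥Δ.1 → Fin q),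
      Summable fun A : {A : Finset (Zd d) // (A ∩ Δ.1).Nonempty} =>
        |Φ A.1 (patch Δ.1 ζ η) - Φ A.1 η|) ∧
    (∀ η : Conf d q,
      Summable fun Δ : {Δ : Finset (Zd d) // (0 : Zd d) ∈ Δ} => |termL R Φ Δ.1 η|) ∧
    TendstoUniformly
      (fun (B : Finset (Zd d)) (η : Conf d q) =>
        ∑ Δ ∈ B.powerset.filter (fun Δ => (0 : Zd d) ∈ Δ), termL R Φ Δ η)
      (FL R Φ) atTop ∧
    Continuous (FL R Φ) ∧
    (∀ ν : Measure (Conf d q), IsProbabilityMeasure ν →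
      pairingL R Φ ν = ∫ η, FL R Φ η ∂ν) :=
  FL_continuous_general R Φ hΦ hΦsum
end

section
/- Fix an integer d ≥ 1, let Ω± = {−1,+1}^{ℤ^d}, and for t > 0 define p_t(s,s') := (1+e^{−2t})/2 if s' = s and (1−e^{−2t})/2 if s' = −s. Given any Borel probability measure ν₀ on Ω±, let ν_t be the unique Borel probability measure with ν_t([η_Λ]) = ∫ ν₀(dσ) Π_{i∈Λ} p_t(σ_i, η_i) for every finite Λ and η_Λ. Then: (i) for ν_t-almost every η and both a ∈ {−1,+1}, (1−e^{−2t})/2 ≤ ν_t({σ : σ(0)=a} | F_{ℤ^d∖{0}})(η) ≤ (1+e^{−2t})/2; (ii) consequently, defining r_t(η) := ν_t({σ : σ(0)=−η(0)} | F_{ℤ^d∖{0}})(η) / ν_t({σ : σ(0)=η(0)} | F_{ℤ^d∖{0}})(η), one has (1−e^{−2t})/(1+e^{−2t}) ≤ r_t(η) ≤ (1+e^{−2t})/(1−e^{−2t}) for ν_t-almost every η; and (iii) ∫ log r_t(η) ν_t(dη) → 0 as t → ∞. -/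
/-!
For finite `Λ ∌ 0` the cylinder formula gives
`ν_t([η_Λ] ∩ {σ(0) = a}) = ∫ p_t(σ_0, a) ∏_{i ∈ Λ} p_t(σ_i, η_i) dν₀ ≥ (1 - e^{-2t})/2 · ν_t([η_Λ])`,
so `(1 - e^{-2t})/2 · ν_t ≤ ν_t(· ∩ {σ(0) = a})` on the algebra of finite-dimensional events
away from the origin, hence, by approximation in measure, on all of `F_{ℤ^d ∖ {0}}`. Tested
against the conditional expectation this is the lower bound in (i); the upper bound follows
because the conditional probabilities of `σ(0) = a` and `σ(0) = -a` add up to `1`. Then (i)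
gives (ii), and (ii) gives `|∫ log r_t dν_t| ≤ log ((1 + e^{-2t})/(1 - e^{-2t})) → 0`.
-/

open MeasureTheory Filter Topology

/-- The configuration space `Ω± = {−1,+1}^{ℤ^d}`, spins encoded as `Bool`
(`true ↔ +1`, `false ↔ −1`, so that `−s` is `!s`). -/
abbrev SpinConf (d : ℕ) := Zd d → Bool

variable {d : ℕ}

/-- The single-site transition probabilities of independent rate-1 spin flips:
`p_t(s,s') = (1+e^{−2t})/2` if `s' = s` and `(1−e^{−2t})/2` if `s' = −s`. -/
noncomputable def pflip (t : ℝ) (s s' : Bool) : ℝ :=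
  if s' = s then (1 + Real.exp (-2 * t)) / 2 else (1 - Real.exp (-2 * t)) / 2

/-- The cylinder set `[η_Λ] = {σ : σ|_Λ = η_Λ}`. -/
def cylB (Λ : Finset (Zd d)) (ω : ↥Λ → Bool) : Set (SpinConf d) :=
  {σ | ∀ j : Λ, σ j = ω j}

/-- `F_S`: the σ-algebra on `Ω±` generated by the coordinates in `S ⊂ ℤ^d`. -/
def cylSigmaB (S : Set (Zd d)) : MeasurableSpace (SpinConf d) :=
  MeasurableSpace.comap (fun σ => S.restrict σ) MeasurableSpace.pi

/-- A version of the conditional probability `ν({σ : σ(0)=a} | F_S)`. -/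
noncomputable def condProbB (ν : Measure (SpinConf d)) (a : Bool) (S : Set (Zd d)) :
    SpinConf d → ℝ :=
  ν[({σ : SpinConf d | σ (0 : Zd d) = a}).indicator fun _ => (1 : ℝ) | cylSigmaB S]

/-- `ν` is non-null with constant `δ > 0`. -/
def NonNullB (ν : Measure (SpinConf d)) (δ : ℝ) : Prop :=
  ∀ a : Bool, ∀ᵐ η ∂ν, δ ≤ condProbB ν a ({(0 : Zd d)}ᶜ : Set (Zd d)) η

/-- `νt` is `ν0` evolved by independent rate-1 spin flips for time `t`:
`ν_t([η_Λ]) = ∫ ν₀(dσ) Π_{i∈Λ} p_t(σ_i, η_i)` for all cylinders. -/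
def IsFlipEvolved (ν0 νt : Measure (SpinConf d)) (t : ℝ) : Prop :=
  ∀ (Λ : Finset (Zd d)) (ω : ↥Λ → Bool),
    νt (cylB Λ ω) = ENNReal.ofReal (∫ σ, ∏ i : ↥Λ, pflip t (σ i) (ω i) ∂ν0)

/-- The ratio `r_t(η) = ν_t({σ(0) = −η(0)} | F_{ℤ^d∖{0}})(η) / ν_t({σ(0) = η(0)} | F_{ℤ^d∖{0}})(η)`. -/
noncomputable def flipRatio (ν : Measure (SpinConf d)) (η : SpinConf d) : ℝ :=
  condProbB ν (!(η (0 : Zd d))) ({(0 : Zd d)}ᶜ : Set (Zd d)) η /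
    condProbB ν (η (0 : Zd d)) ({(0 : Zd d)}ᶜ : Set (Zd d)) η

open scoped ENNReal NNReal symmDiff

namespace MeasureTheory

variable {α : Type*} {m mα : MeasurableSpace α}

theorem Measure.le_of_isSetAlgebra_of_generateFrom {μ ν : Measure α} [IsFiniteMeasure μ]
    [IsFiniteMeasure ν] {C : Set (Set α)} (hC : IsSetAlgebra C) (hgen : mα = .generateFrom C)
    (h : ∀ s ∈ C, μ s ≤ ν s) : μ ≤ ν := by
  refine Measure.le_iff.mpr fun s hs => ENNReal.le_of_forall_pos_le_add fun ε hε _ => ?_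
  obtain ⟨t, htC, hts⟩ := exists_measure_symmDiff_lt_of_generateFrom_isSetRing (μ := μ + ν)
    hC.isSetRing ⟨{Set.univ}, by simp, by simpa using hC.univ_mem, by simp⟩ hgen hs
    (ε := ε) (by exact_mod_cast hε)
  have hcover : ∀ u v : Set α, u ⊆ v ∪ v ∆ u := fun u v x hx => by
    by_cases hv : x ∈ v
    · exact Or.inl hv
    · exact Or.inr (Or.inr ⟨hx, hv⟩)
  calc μ s ≤ μ t + μ (t ∆ s) := (measure_mono (hcover s t)).trans (measure_union_le _ _)
    _ ≤ ν t + μ (t ∆ s) := add_le_add_left (h t htC) _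
    _ ≤ ν s + ν (s ∆ t) + μ (t ∆ s) := by
        gcongr; exact (measure_mono (hcover t s)).trans (measure_union_le _ _)
    _ = ν s + (μ + ν) (t ∆ s) := by
        rw [symmDiff_comm, Measure.add_apply]; ring
    _ ≤ ν s + ε := by gcongr

theorem ae_le_condExp_indicator (hm : m ≤ mα) {μ : Measure α} [IsFiniteMeasure μ] {A : Set α}
    (hA : MeasurableSet A) {c : ℝ≥0} (h : (c • μ).trim hm ≤ (μ.restrict A).trim hm) :
    ∀ᵐ x ∂μ, c ≤ μ[A.indicator fun _ => (1 : ℝ) | m] x := by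
  refine ae_of_ae_trim hm <| ae_le_of_forall_setIntegral_le (integrable_const (c : ℝ))
    (integrable_condExp.trim hm stronglyMeasurable_condExp) fun s hs _ => ?_
  have hμs := (Measure.le_iff.mp h) s hs
  rw [trim_measurableSet_eq hm hs, trim_measurableSet_eq hm hs, Measure.smul_apply,
    ENNReal.smul_def, smul_eq_mul, Measure.restrict_apply (hm s hs)] at hμs
  rw [← setIntegral_trim hm stronglyMeasurable_const hs,
    ← setIntegral_trim hm stronglyMeasurable_condExp hs,
    setIntegral_condExp hm ((integrable_const 1).indicator hA) hs, setIntegral_indicator hA,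
    setIntegral_const, setIntegral_const, smul_eq_mul, smul_eq_mul, mul_one, mul_comm]
  have := ENNReal.toReal_mono (measure_ne_top μ _) hμs
  rwa [ENNReal.toReal_mul, ENNReal.coe_toReal] at this

theorem condExp_indicator_add_compl_ae_eq_one (hm : m ≤ mα) (μ : Measure α) [IsFiniteMeasure μ]
    {A : Set α} (hA : MeasurableSet A) :
    μ[A.indicator fun _ => (1 : ℝ) | m] + μ[Aᶜ.indicator fun _ => (1 : ℝ) | m] =ᵐ[μ] 1 := by
  have hsum : ((A.indicator fun _ => (1 : ℝ)) + Aᶜ.indicator fun _ => 1) = fun _ => 1 :=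
    funext (A.indicator_self_add_compl_apply fun _ => (1 : ℝ))
  refine (condExp_add ((integrable_const 1).indicator hA)
    ((integrable_const 1).indicator hA.compl) m).symm.trans ?_
  rw [hsum, condExp_const hm]
  rfl

theorem abs_integral_log_le_log {μ : Measure α}
    [IsProbabilityMeasure μ] {f : α → ℝ} {q : ℝ} (hq : 0 < q)
    (hf : ∀ᵐ x ∂μ, q⁻¹ ≤ f x ∧ f x ≤ q) : |∫ x, Real.log (f x) ∂μ| ≤ Real.log q := by
  have hlog : ∀ᵐ x ∂μ, ‖Real.log (f x)‖ ≤ Real.log q := hf.mono fun x hx => by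
    rw [Real.norm_eq_abs, abs_le, ← Real.log_inv]
    exact ⟨Real.log_le_log (inv_pos.mpr hq) hx.1,
      Real.log_le_log ((inv_pos.mpr hq).trans_le hx.1) hx.2⟩
  simpa using norm_integral_le_of_norm_le_const hlog

end MeasureTheory

theorem tendsto_log_one_add_exp_div_one_sub_exp :
    Tendsto (fun t : ℝ => Real.log ((1 + Real.exp (-2 * t)) / (1 - Real.exp (-2 * t))))
      atTop (𝓝 0) := by
  have hexp : Tendsto (fun t : ℝ => Real.exp (-2 * t)) atTop (𝓝 0) :=
    Real.tendsto_exp_atBot.comp (tendsto_id.const_mul_atTop_of_neg (by norm_num))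
  simpa using ((tendsto_const_nhds.add hexp).div (tendsto_const_nhds.sub hexp)
    (by norm_num : (1 : ℝ) - 0 ≠ 0)).log (by norm_num : (1 + 0 : ℝ) / (1 - 0) ≠ 0)

section SpinFlip

def finDimSets (S : Set (Zd d)) : Set (Set (SpinConf d)) :=
  {B | ∃ Λ : Finset (Zd d), ↑Λ ⊆ S ∧ ∃ F : Set (Λ → Bool), B = Λ.restrict ⁻¹' F}

theorem isSetAlgebra_finDimSets (S : Set (Zd d)) : IsSetAlgebra (finDimSets S) where
  empty_mem := ⟨∅, by simp, ∅, rfl⟩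
  compl_mem := by
    rintro _ ⟨Λ, hΛ, F, rfl⟩
    exact ⟨Λ, hΛ, Fᶜ, rfl⟩
  union_mem := by
    classical
    rintro _ _ ⟨Λ₁, hΛ₁, F₁, rfl⟩ ⟨Λ₂, hΛ₂, F₂, rfl⟩
    exact ⟨Λ₁ ∪ Λ₂, by simp [hΛ₁, hΛ₂],
      (fun y (j : Λ₁) => y ⟨j, Finset.subset_union_left j.2⟩) ⁻¹' F₁ ∪
        (fun y (j : Λ₂) => y ⟨j, Finset.subset_union_right j.2⟩) ⁻¹' F₂, rfl⟩

theorem cylSigmaB_eq_generateFrom_finDimSets (S : Set (Zd d)) :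
    cylSigmaB S = MeasurableSpace.generateFrom (finDimSets S) := by
  apply le_antisymm
  · rw [cylSigmaB, MeasurableSpace.pi, MeasurableSpace.comap_iSup]
    refine iSup_le fun j => ?_
    rw [MeasurableSpace.comap_comp]
    rintro _ ⟨C, -, rfl⟩
    exact MeasurableSpace.measurableSet_generateFrom
      ⟨{j.1}, by simp, {y | y ⟨j.1, Finset.mem_singleton_self _⟩ ∈ C}, rfl⟩
  · refine MeasurableSpace.generateFrom_le ?_
    rintro _ ⟨Λ, hΛ, F, rfl⟩
    exact ⟨(fun y (j : Λ) => y ⟨j.1, hΛ j.2⟩) ⁻¹' F,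
      measurable_pi_lambda _ (fun j => measurable_pi_apply _) (MeasurableSet.of_discrete), rfl⟩

theorem cylSigmaB_le (S : Set (Zd d)) :
    cylSigmaB S ≤ (inferInstance : MeasurableSpace (SpinConf d)) :=
  (Set.measurable_restrict S).comap_le

variable {t : ℝ}

theorem exp_neg_two_mul_le_one (ht : 0 ≤ t) : Real.exp (-2 * t) ≤ 1 :=
  Real.exp_le_one_iff.mpr (by linarith)

theorem exp_neg_two_mul_lt_one (ht : 0 < t) : Real.exp (-2 * t) < 1 :=
  Real.exp_lt_one_iff.mpr (by linarith)

theorem pflip_ge (t : ℝ) (s s' : Bool) : (1 - Real.exp (-2 * t)) / 2 ≤ pflip t s s' := by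
  have := Real.exp_pos (-2 * t)
  unfold pflip; split_ifs <;> linarith

theorem pflip_nonneg (ht : 0 ≤ t) (s s' : Bool) : 0 ≤ pflip t s s' :=
  le_trans (by linarith [exp_neg_two_mul_le_one ht]) (pflip_ge t s s')

theorem pflip_le_one (ht : 0 ≤ t) (s s' : Bool) : pflip t s s' ≤ 1 := by
  have := Real.exp_pos (-2 * t)
  have := exp_neg_two_mul_le_one ht
  unfold pflip; split_ifs <;> linarith

theorem measurableSet_spin_zero_eq (a : Bool) : MeasurableSet {σ : SpinConf d | σ 0 = a} :=
  measurableSet_eq_fun (measurable_pi_apply 0) measurable_const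

theorem cylB_eq_preimage_restrict (Λ : Finset (Zd d)) (ω : Λ → Bool) :
    cylB Λ ω = Λ.restrict ⁻¹' ({ω} : Set (Λ → Bool)) := by
  ext σ
  simp [cylB, funext_iff]

theorem cylB_inter_eq_cylB_insert {Λ : Finset (Zd d)} (h0 : 0 ∉ Λ) (ω : Λ → Bool) (a : Bool) :
    cylB Λ ω ∩ {σ | σ 0 = a}
      = cylB (insert 0 Λ) (fun j => if h : j.1 ∈ Λ then ω ⟨j, h⟩ else a) := by
  ext σ
  simp only [cylB, Set.mem_inter_iff, Set.mem_ofPred_eq, Subtype.forall, Finset.mem_insert]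
  constructor
  · rintro ⟨hΛ, h0σ⟩ j (rfl | hj)
    · simpa [h0] using h0σ
    · simpa [hj] using hΛ j hj
  · intro h
    exact ⟨fun j hj => by simpa [hj] using h j (Or.inr hj), by simpa [h0] using h 0 (Or.inl rfl)⟩

theorem prod_pflip_insert_zero {Λ : Finset (Zd d)} (h0 : 0 ∉ Λ) (ω : Λ → Bool) (a : Bool)
    (σ : SpinConf d) :
    ∏ i : ↥(insert 0 Λ), pflip t (σ i) (if h : i.1 ∈ Λ then ω ⟨i, h⟩ else a)
      = pflip t (σ 0) a * ∏ i : Λ, pflip t (σ i) (ω i) := by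
  classical
  rw [Finset.prod_coe_sort (insert 0 Λ)
      (fun i => pflip t (σ i) (if h : i ∈ Λ then ω ⟨i, h⟩ else a)),
    Finset.prod_insert h0, dif_neg h0, ← Finset.prod_coe_sort Λ]
  simp

theorem measurable_prod_pflip (Λ : Finset (Zd d)) (ω : Λ → Bool) :
    Measurable fun σ : SpinConf d => ∏ i : Λ, pflip t (σ i) (ω i) :=
  Finset.measurable_prod _ fun i _ =>
    (measurable_of_countable fun b => pflip t b (ω i)).comp (measurable_pi_apply _)

theorem integrable_prod_pflip (ht : 0 ≤ t) (ν0 : Measure (SpinConf d)) [IsFiniteMeasure ν0]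
    (Λ : Finset (Zd d)) (ω : Λ → Bool) :
    Integrable (fun σ : SpinConf d => ∏ i : Λ, pflip t (σ i) (ω i)) ν0 :=
  .of_bound (measurable_prod_pflip Λ ω).aestronglyMeasurable 1 <| .of_forall fun σ => by
    rw [Real.norm_of_nonneg (Finset.prod_nonneg fun i _ => pflip_nonneg ht _ _)]
    exact Finset.prod_le_one (fun i _ => pflip_nonneg ht _ _) fun i _ => pflip_le_one ht _ _

variable {ν0 ν : Measure (SpinConf d)}

theorem measure_cylB_inter_ge [IsFiniteMeasure ν0] (hev : IsFlipEvolved ν0 ν t) (ht : 0 ≤ t)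
    {Λ : Finset (Zd d)} (h0 : 0 ∉ Λ) (ω : Λ → Bool) (a : Bool) :
    ENNReal.ofReal ((1 - Real.exp (-2 * t)) / 2) * ν (cylB Λ ω)
      ≤ ν (cylB Λ ω ∩ {σ | σ 0 = a}) := by
  rw [cylB_inter_eq_cylB_insert h0, hev, hev, ← ENNReal.ofReal_mul (by
      linarith [exp_neg_two_mul_le_one ht]), ← integral_const_mul]
  refine ENNReal.ofReal_le_ofReal (integral_mono ((integrable_prod_pflip ht ν0 Λ ω).const_mul _)
    (integrable_prod_pflip ht ν0 _ _) fun σ => ?_)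
  rw [prod_pflip_insert_zero h0]
  exact mul_le_mul_of_nonneg_right (pflip_ge t _ _)
    (Finset.prod_nonneg fun i _ => pflip_nonneg ht _ _)

theorem measure_restrict_ge_of_mem_finDimSets [IsFiniteMeasure ν0] (hev : IsFlipEvolved ν0 ν t)
    (ht : 0 ≤ t) (a : Bool) {B : Set (SpinConf d)} (hB : B ∈ finDimSets {0}ᶜ) :
    ENNReal.ofReal ((1 - Real.exp (-2 * t)) / 2) * ν B ≤ ν.restrict {σ | σ 0 = a} B := by
  obtain ⟨Λ, hΛ, F, rfl⟩ := hB
  have h0 : (0 : Zd d) ∉ Λ := fun h => hΛ h rfl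
  have hfiber : ∀ ω : Λ → Bool, MeasurableSet (Λ.restrict ⁻¹' ({ω} : Set (Λ → Bool))) :=
    fun ω => Finset.measurable_restrict (X := fun _ => Bool) Λ (measurableSet_singleton ω)
  rw [← F.toFinite.coe_toFinset, ← sum_measure_preimage_singleton _ fun ω _ => hfiber ω,
    ← sum_measure_preimage_singleton _ fun ω _ => hfiber ω, Finset.mul_sum]
  gcongr with ω
  rw [Measure.restrict_apply (hfiber ω), ← cylB_eq_preimage_restrict]
  exact measure_cylB_inter_ge hev ht h0 ω a

theorem condProbB_ge [IsFiniteMeasure ν0] [IsFiniteMeasure ν] (hev : IsFlipEvolved ν0 ν t)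
    (ht : 0 ≤ t) (a : Bool) :
    ∀ᵐ η ∂ν, (1 - Real.exp (-2 * t)) / 2 ≤ condProbB ν a {0}ᶜ η := by
  have hm := cylSigmaB_le ({0}ᶜ : Set (Zd d))
  have hle : (((1 - Real.exp (-2 * t)) / 2).toNNReal • ν).trim hm
      ≤ (ν.restrict {σ | σ 0 = a}).trim hm := by
    refine Measure.le_of_isSetAlgebra_of_generateFrom (isSetAlgebra_finDimSets _)
      (cylSigmaB_eq_generateFrom_finDimSets _) fun B hB => ?_
    have hBm : MeasurableSet[cylSigmaB {0}ᶜ] B := by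
      rw [cylSigmaB_eq_generateFrom_finDimSets]
      exact MeasurableSpace.measurableSet_generateFrom hB
    rw [trim_measurableSet_eq hm hBm, trim_measurableSet_eq hm hBm, Measure.smul_apply]
    exact measure_restrict_ge_of_mem_finDimSets hev ht a hB
  have hcond := ae_le_condExp_indicator hm (measurableSet_spin_zero_eq a) hle
  rwa [Real.coe_toNNReal _ (by linarith [exp_neg_two_mul_le_one ht])] at hcond

theorem condProbB_add_condProbB_not [IsFiniteMeasure ν] (a : Bool) (S : Set (Zd d)) :
    condProbB ν a S + condProbB ν (!a) S =ᵐ[ν] 1 := by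
  have hcompl : {σ : SpinConf d | σ 0 = !a} = {σ | σ 0 = a}ᶜ := by
    ext σ
    simp [Bool.eq_not_iff]
  unfold condProbB
  rw [hcompl]
  exact condExp_indicator_add_compl_ae_eq_one (cylSigmaB_le S) ν (measurableSet_spin_zero_eq a)

theorem condProbB_mem_bounds [IsFiniteMeasure ν0] [IsFiniteMeasure ν] (hev : IsFlipEvolved ν0 ν t)
    (ht : 0 ≤ t) (a : Bool) :
    ∀ᵐ η ∂ν, (1 - Real.exp (-2 * t)) / 2 ≤ condProbB ν a {0}ᶜ η ∧
      condProbB ν a {0}ᶜ η ≤ (1 + Real.exp (-2 * t)) / 2 := by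
  filter_upwards [condProbB_ge hev ht a, condProbB_ge hev ht (!a),
    condProbB_add_condProbB_not a {0}ᶜ] with η hge hge_not hsum
  simp only [Pi.add_apply, Pi.one_apply] at hsum
  exact ⟨hge, by linarith⟩

theorem flipRatio_bounds [IsFiniteMeasure ν0] [IsFiniteMeasure ν] (hev : IsFlipEvolved ν0 ν t)
    (ht : 0 < t) :
    ∀ᵐ η ∂ν, (1 - Real.exp (-2 * t)) / (1 + Real.exp (-2 * t)) ≤ flipRatio ν η ∧
      flipRatio ν η ≤ (1 + Real.exp (-2 * t)) / (1 - Real.exp (-2 * t)) := by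
  filter_upwards [ae_all_iff.mpr (condProbB_mem_bounds hev ht.le)] with η hbounds
  obtain ⟨hnum_ge, hnum_le⟩ := hbounds (!η 0)
  obtain ⟨hden_ge, hden_le⟩ := hbounds (η 0)
  have hlo : 0 < (1 - Real.exp (-2 * t)) / 2 := by
    linarith [exp_neg_two_mul_lt_one ht]
  rw [← div_div_div_cancel_right₀ two_ne_zero (1 - Real.exp (-2 * t)) (1 + Real.exp (-2 * t)),
    ← div_div_div_cancel_right₀ two_ne_zero (1 + Real.exp (-2 * t)) (1 - Real.exp (-2 * t))]
  exact ⟨div_le_div₀ (by linarith) hnum_ge (by linarith) hden_le,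
    div_le_div₀ (by linarith) hnum_le hlo hden_ge⟩

end SpinFlip

theorem flip_entropy_loss_vanishes_general
    (ν0 : Measure (SpinConf d)) [IsProbabilityMeasure ν0]
    (νt : ℝ → Measure (SpinConf d)) (hprob : ∀ t : ℝ, IsProbabilityMeasure (νt t))
    (hev : ∀ t : ℝ, 0 < t → IsFlipEvolved ν0 (νt t) t) :
    (∀ t : ℝ, 0 < t → ∀ a : Bool, ∀ᵐ η ∂(νt t),
      (1 - Real.exp (-2 * t)) / 2
          ≤ condProbB (νt t) a ({(0 : Zd d)}ᶜ : Set (Zd d)) η ∧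
        condProbB (νt t) a ({(0 : Zd d)}ᶜ : Set (Zd d)) η
          ≤ (1 + Real.exp (-2 * t)) / 2) ∧
    (∀ t : ℝ, 0 < t → ∀ᵐ η ∂(νt t),
      (1 - Real.exp (-2 * t)) / (1 + Real.exp (-2 * t)) ≤ flipRatio (νt t) η ∧
        flipRatio (νt t) η ≤ (1 + Real.exp (-2 * t)) / (1 - Real.exp (-2 * t))) ∧
    Tendsto (fun t : ℝ => ∫ η, Real.log (flipRatio (νt t) η) ∂(νt t)) atTop (𝓝 0) := by
  have hratio := fun t (ht : 0 < t) => flipRatio_bounds (ν := νt t) (hev t ht) ht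
  refine ⟨fun t ht => condProbB_mem_bounds (ν := νt t) (hev t ht) ht.le, hratio,
    squeeze_zero_norm' ?_ tendsto_log_one_add_exp_div_one_sub_exp⟩
  filter_upwards [eventually_gt_atTop 0] with t ht
  refine abs_integral_log_le_log
    (div_pos (by positivity) (by linarith [exp_neg_two_mul_lt_one ht])) ?_
  simpa only [inv_div] using hratio t ht

/-- the explicit example in the final section of the paper:
vanishing entropy loss along the infinite-temperature Glauber trajectory. For any
initial measure `ν₀` evolved by independent rate-1 spin flips: (i) the single-site
conditional probabilities of `ν_t` lie a.e. between `(1−e^{−2t})/2` and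
`(1+e^{−2t})/2`; (ii) hence the ratio `r_t` lies a.e. between
`(1−e^{−2t})/(1+e^{−2t})` and `(1+e^{−2t})/(1−e^{−2t})`; and (iii)
`∫ log r_t dν_t → 0` as `t → ∞`. -/
theorem flip_entropy_loss_vanishes (hd : 1 ≤ d)
    (ν0 : Measure (SpinConf d)) [IsProbabilityMeasure ν0]
    (νt : ℝ → Measure (SpinConf d)) (hprob : ∀ t : ℝ, IsProbabilityMeasure (νt t))
    (hev : ∀ t : ℝ, 0 < t → IsFlipEvolved ν0 (νt t) t) :
    (∀ t : ℝ, 0 < t → ∀ a : Bool, ∀ᵐ η ∂(νt t),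
      (1 - Real.exp (-2 * t)) / 2
          ≤ condProbB (νt t) a ({(0 : Zd d)}ᶜ : Set (Zd d)) η ∧
        condProbB (νt t) a ({(0 : Zd d)}ᶜ : Set (Zd d)) η
          ≤ (1 + Real.exp (-2 * t)) / 2) ∧
    (∀ t : ℝ, 0 < t → ∀ᵐ η ∂(νt t),
      (1 - Real.exp (-2 * t)) / (1 + Real.exp (-2 * t)) ≤ flipRatio (νt t) η ∧
        flipRatio (νt t) η ≤ (1 + Real.exp (-2 * t)) / (1 - Real.exp (-2 * t))) ∧
    Tendsto (fun t : ℝ => ∫ η, Real.log (flipRatio (νt t) η) ∂(νt t)) atTop (𝓝 0) :=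
  flip_entropy_loss_vanishes_general ν0 νt hprob hev
end
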